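/- Let L be a finite ranked lattice of rank r with nonvanishing Möbius function, and let 0 ≤ d ≤ r. Then every family F ⊆ L of VC dimension at most d has at most as many elements as there are elements of L of rank at most d. Moreover, the family F_d of all elements of rank ≤ d has VC dimension exactly d, so the bound is tight. -/

import Mathlib

open scoped Classical

/-- `F` shatters `z`: for every `x ≤ z` there is `w ∈ F` with `w ⊓ z = x`. -/
def Shatters {L : Type*} [SemilatticeInf L] (F : Set L) (z : L) : Prop :=
  ∀ x ≤ z, ∃ w ∈ F, w ⊓ z = x

/-- The set of elements shattered by `F`. -/
def Str {L : Type*} [SemilatticeInf L] (F : Set L) : Set L := {z | Shatters F z}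


/-- The Möbius function of a finite poset. -/
noncomputable def mu {L : Type*} [PartialOrder L] [Fintype L] (x y : L) : ℚ :=
  if x = y then 1
  else if x ≤ y then
    - ∑ z ∈ (Finset.univ.filter fun z => x ≤ z ∧ z < y).attach, mu x z.1
  else 0
termination_by (Finset.univ.filter fun z : L => z < y).card
decreasing_by
  · have hz := (Finset.mem_filter.mp z.2).2.2
    apply Finset.card_lt_card
    constructor
    · intro w hw
      simp only [Finset.mem_filter, Finset.mem_univ, true_and] at hw ⊢
      exact hw.trans hz
    · intro hsub
      have hmem : z.1 ∈ Finset.univ.filter fun w : L => w < y := by simp [hz]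
      have := hsub hmem
      simp at this

/-!
For `z : L` let `γ z = iciIndicator F z : F → ℚ` be the indicator of `{w ∈ F | z ≤ w}`. Möbius
inversion over `[x, y]` gives `∑_{x ≤ z ≤ y} μ(x, z) γ z (w) = [x = y ⊓ w]`. With `y = ⊤` this
writes every basis vector of `ℚ^F` through the `γ z`, so they span. If `F` does not shatter `z`,
some `x ≤ z` is never of the form `z ⊓ w`, the identity with `y = z` becomes a linear relation,
and `μ(x, z) ≠ 0` solves it for `γ z` in terms of the `γ y` with `y < z`. Hence the `γ z` with
`z` shattered span `ℚ^F`, so `|F| ≤ |Str F|`, and a family of VC dimension at most `d` shatters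
only elements of rank at most `d`.
-/

section Mobius

open Finset

variable {L : Type*} [PartialOrder L] [Fintype L]

attribute [local instance] Fintype.toLocallyFiniteOrder

theorem mu_self (x : L) : mu x x = 1 := by
  rw [mu]; simp

theorem mu_of_lt {x y : L} (h : x < y) : mu x y = -∑ z ∈ Ico x y, mu x z := by
  rw [mu, if_neg h.ne, if_pos h.le, sum_attach _ (mu x)]
  congr 2
  ext z
  simp

theorem sum_Icc_mu (x y : L) : ∑ z ∈ Icc x y, mu x z = if x = y then 1 else 0 := by
  rcases eq_or_ne x y with rfl | hne
  · simp [mu_self]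
  by_cases hle : x ≤ y
  · rw [← Ico_insert_right hle, sum_insert right_notMem_Ico, mu_of_lt (hle.lt_of_ne hne),
      neg_add_cancel, if_neg hne]
  · rw [Icc_eq_empty hle, sum_empty, if_neg hne]

end Mobius

section Pajor

open Finset Submodule

variable {L : Type*} [Lattice L] [Fintype L]

attribute [local instance] Fintype.toLocallyFiniteOrder

theorem sum_Icc_mu_ite_le (x y w : L) :
    ∑ z ∈ Icc x y, (if z ≤ w then mu x z else 0) = if x = y ⊓ w then 1 else 0 := by
  rw [← sum_filter, ← sum_Icc_mu]
  congr 1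
  ext z
  simp [and_assoc]

noncomputable def iciIndicator (F : Set L) (z : L) : F → ℚ := fun w => if z ≤ w then 1 else 0

theorem sum_Icc_mu_smul_iciIndicator (F : Set L) (x y : L) :
    ∑ z ∈ Icc x y, mu x z • iciIndicator F z =
      fun w : F => if x = y ⊓ (w : L) then (1 : ℚ) else 0 := by
  funext w
  simp only [Finset.sum_apply, Pi.smul_apply, iciIndicator, smul_eq_mul, mul_ite, mul_one,
    mul_zero]
  exact sum_Icc_mu_ite_le x y w

theorem span_range_iciIndicator [OrderTop L] (F : Set L) :
    span ℚ (Set.range (iciIndicator F)) = ⊤ := by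
  rw [eq_top_iff, ← (Pi.basisFun ℚ F).span_eq, span_le]
  rintro _ ⟨x, rfl⟩
  have hsingle : Pi.basisFun ℚ F x = ∑ z ∈ Icc (x : L) ⊤, mu (x : L) z • iciIndicator F z := by
    rw [sum_Icc_mu_smul_iciIndicator]
    funext w
    simp [Pi.single_apply, Subtype.ext_iff, eq_comm]
  rw [hsingle]
  exact sum_mem fun z _ => smul_mem _ _ (subset_span (Set.mem_range_self z))

theorem mu_smul_iciIndicator_eq_neg_sum {F : Set L} {x z : L} (hxz : x ≤ z)
    (hx : ∀ w ∈ F, w ⊓ z ≠ x) :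
    mu x z • iciIndicator F z = -∑ y ∈ Ico x z, mu x y • iciIndicator F y := by
  rw [eq_neg_iff_add_eq_zero,
    ← sum_insert (f := fun y => mu x y • iciIndicator F y) right_notMem_Ico, Ico_insert_right hxz,
    sum_Icc_mu_smul_iciIndicator]
  funext w
  simp only [Pi.zero_apply, ite_eq_right_iff, one_ne_zero, imp_false]
  exact fun h => hx w w.2 (by rw [inf_comm, h])

theorem iciIndicator_mem_span_str (hmu : ∀ x y : L, x ≤ y → mu x y ≠ 0) (F : Set L) (z : L) :
    iciIndicator F z ∈ span ℚ (iciIndicator F '' Str F) := by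
  induction z using WellFoundedLT.induction with
  | ind z ih =>
    by_cases hz : z ∈ Str F
    · exact subset_span (Set.mem_image_of_mem _ hz)
    have hz : ¬∀ x ≤ z, ∃ w ∈ F, w ⊓ z = x := hz
    push Not at hz
    obtain ⟨x, hxz, hx⟩ := hz
    have hmem : mu x z • iciIndicator F z ∈ span ℚ (iciIndicator F '' Str F) := by
      rw [mu_smul_iciIndicator_eq_neg_sum hxz hx]
      exact neg_mem (sum_mem fun y hy => smul_mem _ _ (ih y (mem_Ico.mp hy).2))
    simpa [smul_smul, inv_mul_cancel₀ (hmu x z hxz)] using smul_mem _ (mu x z)⁻¹ hmem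

theorem ncard_le_ncard_str [OrderTop L] (hmu : ∀ x y : L, x ≤ y → mu x y ≠ 0) (F : Set L) :
    F.ncard ≤ (Str F).ncard := by
  have hspan : span ℚ (iciIndicator F '' Str F) = ⊤ := by
    rw [eq_top_iff, ← span_range_iciIndicator F, span_le]
    rintro _ ⟨z, rfl⟩
    exact iciIndicator_mem_span_str hmu F z
  calc F.ncard = Module.finrank ℚ (F → ℚ) := by
        rw [Module.finrank_fintype_fun_eq_card, ← Nat.card_eq_fintype_card, Nat.card_coe_set_eq]
    _ = Module.finrank ℚ (span ℚ (iciIndicator F '' Str F)) := by rw [hspan, finrank_top]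
    _ ≤ Fintype.card (Str F) := by rw [Set.image_eq_range]; exact finrank_range_le_card _
    _ = (Str F).ncard := by rw [← Nat.card_eq_fintype_card, Nat.card_coe_set_eq]

end Pajor

section Shatters

variable {L : Type*} [SemilatticeInf L] {F : Set L} {z : L}

theorem Shatters.exists_mem_le (h : Shatters F z) : ∃ w ∈ F, z ≤ w :=
  let ⟨w, hw, hwz⟩ := h z le_rfl
  ⟨w, hw, inf_eq_right.mp hwz⟩

theorem IsLowerSet.shatters (hF : IsLowerSet F) (hz : z ∈ F) : Shatters F z :=
  fun x hx => ⟨x, hF hx hz, inf_eq_left.mpr hx⟩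

end Shatters

section Rank

variable {L : Type*} [PartialOrder L] [Fintype L]

theorem strictMono_of_forall_covBy_eq_succ {r : L → ℕ}
    (hrcov : ∀ x y : L, x ⋖ y → r y = r x + 1) : StrictMono r :=
  letI := Fintype.toLocallyFiniteOrder (α := L)
  (strictMono_iff_forall_covBy r).2 fun x y h => (hrcov x y h).symm ▸ Nat.lt_succ_self _

theorem exists_le_rank_eq_of_le [OrderBot L] {r : L → ℕ} (hr0 : r ⊥ = 0)
    (hrcov : ∀ x y : L, x ⋖ y → r y = r x + 1) (y : L) {k : ℕ} (hk : k ≤ r y) :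
    ∃ z ≤ y, r z = k := by
  induction y using WellFoundedLT.induction with
  | ind y ih =>
    rcases hk.eq_or_lt with hk | hk
    · exact ⟨y, le_rfl, hk.symm⟩
    have hy : ⊥ < y := bot_lt_iff_ne_bot.mpr fun h => by rw [h, hr0] at hk; omega
    obtain ⟨x, -, hxy⟩ := exists_le_covBy_of_lt hy
    obtain ⟨z, hzx, hz⟩ := ih x hxy.lt (by rw [hrcov x y hxy] at hk; omega)
    exact ⟨z, hzx.trans hxy.le, hz⟩

end Rank

/-- Sauer–Shelah–Perles for ranked lattices with nonvanishing Möbius function: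
a family of VC dimension at most `d` has at most as many elements as there are elements
of rank at most `d`, and the family of all elements of rank at most `d` has VC
dimension exactly `d`, so the bound is tight. -/
theorem sauer_shelah_perles {L : Type*} [Lattice L] [Fintype L] [BoundedOrder L]
    (r : L → ℕ) (hr0 : r ⊥ = 0) (hrcov : ∀ x y : L, x ⋖ y → r y = r x + 1)
    (hmu : ∀ x y : L, x ≤ y → mu x y ≠ 0)
    (d : ℕ) (hd : d ≤ r ⊤)
    (F : Set L) (hVC : ∀ z, Shatters F z → r z ≤ d) :
    F.ncard ≤ {x : L | r x ≤ d}.ncard ∧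
    (∀ z, Shatters {x : L | r x ≤ d} z → r z ≤ d) ∧
    (∃ z, Shatters {x : L | r x ≤ d} z ∧ r z = d) := by
  have hmono : Monotone r := (strictMono_of_forall_covBy_eq_succ hrcov).monotone
  have hlower : IsLowerSet {x : L | r x ≤ d} := fun _ _ hba ha => (hmono hba).trans ha
  refine ⟨?_, ?_, ?_⟩
  · exact (ncard_le_ncard_str hmu F).trans (Set.ncard_le_ncard hVC)
  · intro z hz
    obtain ⟨w, hw, hzw⟩ := hz.exists_mem_le
    exact (hmono hzw).trans hw
  · obtain ⟨z, -, hz⟩ := exists_le_rank_eq_of_le hr0 hrcov ⊤ hd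
    exact ⟨z, hlower.shatters hz.le, hz⟩
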